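/- With G constructed from CNF formula F as above (vertices v_i, v̄_i and clause-copies w_j^1,…,w_j^s; edges {v_i,v̄_i}; literal vertex adjacent to all s copies of each clause containing it): if F is unsatisfiable, then every independent dominating set of G has size at least s. -/
import Mathlib


/-- `X` is an independent set in `G`. -/
def IsIndepSet' {V : Type*} (G : SimpleGraph V) (X : Set V) : Prop :=
  ∀ x ∈ X, ∀ y ∈ X, ¬ G.Adj x y

/-- `D` is a dominating set of `G`. -/
def IsDomSet {V : Type*} (G : SimpleGraph V) (D : Set V) : Prop :=
  ∀ v : V, ∃ x ∈ D, x = v ∨ G.Adj x v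

/-- The graph built from a CNF formula with `n` variables, `m` clauses `Cl j` and `s` copies
of each clause vertex (see the construction of Irving): edges `{v_i, v̄_i}`, and a literal
vertex is adjacent to all `s` copies of each clause containing it. -/
def CNFGraph (n m s : ℕ) (Cl : Fin m → Set (Fin n × Bool)) :
    SimpleGraph ((Fin n × Bool) ⊕ (Fin m × Fin s)) :=
  SimpleGraph.fromRel fun x y =>
    match x, y with
    | Sum.inl (i, _), Sum.inl (i', _) => i = i'
    | Sum.inl l, Sum.inr (j, _) => l ∈ Cl j
    | _, _ => False

/-- If the CNF formula is unsatisfiable, then every independent dominating set of `CNFGraph`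
has size at least `s`. -/
theorem cnfGraph_indepDom_large_of_unsat (n m s : ℕ) (Cl : Fin m → Set (Fin n × Bool))
    (hunsat : ¬ ∃ φ : Fin n → Bool, ∀ j, ∃ i, (i, φ i) ∈ Cl j)
    (D : Set ((Fin n × Bool) ⊕ (Fin m × Fin s)))
    (hind : IsIndepSet' (CNFGraph n m s Cl) D)
    (hdom : IsDomSet (CNFGraph n m s Cl) D) :
    s ≤ D.ncard := by
  classical
  set φ : Fin n → Bool := fun i => if Sum.inl (i, true) ∈ D then true else false with hφ
  -- get a failed clause
  push_neg at hunsat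
  obtain ⟨j, hj⟩ := hunsat φ
  -- claim: for any literal (i,b) ∈ D, b = φ i
  have hlit : ∀ i b, Sum.inl (i, b) ∈ D → b = φ i := by
    intro i b hb
    cases b with
    | true => simp [hφ, hb]
    | false =>
      by_contra h
      have ht : Sum.inl (i, true) ∈ D := by
        simp only [hφ] at h
        by_contra ht; simp [ht] at h
      exact hind _ hb _ ht ⟨by simp, Or.inl rfl⟩
  -- every copy of clause j is in D
  have hw : ∀ ℓ : Fin s, Sum.inr (j, ℓ) ∈ D := by
    intro ℓ
    obtain ⟨x, hxD, hx⟩ := hdom (Sum.inr (j, ℓ))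
    rcases hx with rfl | hadj
    · exact hxD
    · rcases x with ⟨i, b⟩ | ⟨j', ℓ'⟩
      · obtain ⟨-, hrel⟩ := hadj
        rcases hrel with h | h
        · have : (i, b) ∈ Cl j := h
          rw [hlit i b hxD] at this
          exact absurd this (hj i)
        · exact h.elim
      · obtain ⟨-, hrel⟩ := hadj
        rcases hrel with h | h <;> exact h.elim
  -- injection Fin s → D
  have hinj : Function.Injective (fun ℓ : Fin s => (⟨Sum.inr (j, ℓ), hw ℓ⟩ : D)) := by
    intro a b hab
    simpa using hab
  calc s = Nat.card (Fin s) := by simp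
    _ ≤ Nat.card D := Nat.card_le_card_of_injective _ hinj
    _ = D.ncard := Nat.card_coe_set_eq D
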